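/- There exist an information network (V,d,b) whose directed graph on V\{d} (with an edge from v to u whenever b v u > 0) contains a directed cycle, and a time horizon T ≥ 1, such that the expected influence A ↦ σ̄(A,∅) over the period [1,T], as a set function on subsets of V\{d}, is not submodular. -/

import Mathlib

open MeasureTheory

/-- An information network: a finite node set `V` with a distinguished void node `d`
and a row-stochastic weight matrix `b` with entries in `[0,1]` and `b d d = 1`. -/
structure InfoNetwork (V : Type*) [Fintype V] where
  d : V
  b : V → V → ℝ
  b_nonneg : ∀ v u, 0 ≤ b v u
  b_le_one : ∀ v u, b v u ≤ 1
  row_sum : ∀ v, ∑ u, b v u = 1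
  void_loop : b d d = 1

/-- The uniform probability measure on the interval `(0,1)`. -/
noncomputable def unifMeasure : Measure ℝ := volume.restrict (Set.Ioo (0:ℝ) 1)

/-- Product over `V` of uniform measures on `(0,1)`: the distribution of the thresholds. -/
noncomputable def thresholdMeasure (V : Type*) [Fintype V] : Measure (V → ℝ) :=
  Measure.pi fun _ : V => unifMeasure

namespace InfoNetwork

variable {V : Type*} [Fintype V]

/-- The set of active nodes at time `t` under the non-progressive linear threshold model,
with transient initial set `A`, permanent initial set `Ahat` and thresholds `θ`. -/
noncomputable def activeSet (N : InfoNetwork V) (A Ahat : Set V) (θ : V → ℝ) : ℕ → Set V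
  | 0 => A ∪ Ahat
  | t+1 => Ahat ∪
      {v | v ∉ Ahat ∧ θ v ≤ ∑ u, (N.activeSet A Ahat θ t).indicator (N.b v) u}

/-- `E[X^t_v(A,Ahat)]`: the probability (over the random thresholds) that `v` is active
at time `t`. -/
noncomputable def EX (N : InfoNetwork V) (A Ahat : Set V) (t : ℕ) (v : V) : ℝ :=
  (thresholdMeasure V {θ | v ∈ N.activeSet A Ahat θ t}).toReal

/-- The expected influence over the period `[1,T]`. -/
noncomputable def sigmaBar (N : InfoNetwork V) (T : ℕ) (A Ahat : Set V) : ℝ :=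
  (1 / (T : ℝ)) * ∑ t ∈ Finset.Icc 1 T, ∑ v, N.EX A Ahat t v

/-- The edge relation of the directed graph on `V \ {d}`. -/
def edgeRel (N : InfoNetwork V) (v u : V) : Prop :=
  v ≠ N.d ∧ u ≠ N.d ∧ 0 < N.b v u

/-- The network is acyclic if the directed graph on `V \ {d}` has no directed cycle. -/
def Acyclic (N : InfoNetwork V) : Prop :=
  ∀ v, ¬ Relation.TransGen N.edgeRel v v

end InfoNetwork

/-- A real-valued set function `f` is submodular on the ground set `S`. -/
def SubmodularOn {V : Type*} (S : Set V) (f : Set V → ℝ) : Prop :=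
  ∀ A B : Set V, A ⊆ B → B ⊆ S → ∀ w ∈ S, w ∉ B →
    f (insert w B) - f B ≤ f (insert w A) - f A

/-!
Take the void node `0` and nodes `1, 2, 3`, where `1` and `3` each put all their weight on the
other and `2` splits its weight equally between itself and `3`. Almost surely every threshold
lies in `(0,1)`, so `1` and `3` copy each other's previous state, and the only randomness left is
whether `θ 2 ≤ 1/2`, an event of probability `1/2`. Over the horizon `T = 2` this gives
`σ̄({1}) = 5/4`, `σ̄({1,2}) = 3/2`, `σ̄({1,3}) = 5/2` and `σ̄({1,2,3}) = 3`: adding `3` is worth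
more to `{1,2}` than to `{1}`, because `2` and `3` together keep `2` active whatever its threshold.
-/

open Finset

instance : IsProbabilityMeasure unifMeasure :=
  ⟨by simp [unifMeasure, Real.volume_Ioo]⟩

instance (V : Type*) [Fintype V] : IsProbabilityMeasure (thresholdMeasure V) := by
  unfold thresholdMeasure; infer_instance

lemma unifMeasure_Iic {p : ℝ} (hp : p ≤ 1) : unifMeasure (Set.Iic p) = ENNReal.ofReal p := by
  rw [unifMeasure, Measure.restrict_congr_set Ioo_ae_eq_Ioc,
    Measure.restrict_apply measurableSet_Iic, Set.Iic_inter_Ioc_of_le hp, Real.volume_Ioc,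
    sub_zero]

lemma ae_unifMeasure_mem_Ioo : ∀ᵐ x ∂unifMeasure, x ∈ Set.Ioo (0 : ℝ) 1 :=
  ae_restrict_mem measurableSet_Ioo

section Thresholds

variable {V : Type*} [Fintype V]

lemma measureReal_thresholdMeasure_le {p : ℝ} (hp₀ : 0 ≤ p) (hp₁ : p ≤ 1) (v : V) :
    (thresholdMeasure V).real {θ | θ v ≤ p} = p := by
  rw [measureReal_def, show {θ : V → ℝ | θ v ≤ p} = Function.eval v ⁻¹' Set.Iic p from rfl,
    thresholdMeasure, (measurePreserving_eval (fun _ : V => unifMeasure) v).measure_preimage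
      measurableSet_Iic.nullMeasurableSet, unifMeasure_Iic hp₁, ENNReal.toReal_ofReal hp₀]

lemma ae_thresholdMeasure_mem_Ioo : ∀ᵐ θ ∂thresholdMeasure V, ∀ v, θ v ∈ Set.Ioo (0 : ℝ) 1 := by
  rw [ae_all_iff]
  intro v
  exact (measurePreserving_eval (fun _ : V => unifMeasure) v).quasiMeasurePreserving.ae
    ae_unifMeasure_mem_Ioo

end Thresholds

open Classical in
lemma sum_measureReal_mem_of_ae_eq {Ω V : Type*} [MeasurableSpace Ω] [Fintype V]
    {μ : Measure Ω} [IsFiniteMeasure μ] {E : Set Ω} (hE : MeasurableSet E) {S S' : Finset V}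
    {s : Ω → Set V} (hS : ∀ᵐ x ∂μ, x ∈ E → s x = S) (hS' : ∀ᵐ x ∂μ, x ∉ E → s x = S') :
    ∑ v, μ.real {x | v ∈ s x} = μ.real E * #S + μ.real Eᶜ * #S' := by
  have hv : ∀ v, μ.real {x | v ∈ s x} =
      (if v ∈ S then μ.real E else 0) + (if v ∈ S' then μ.real Eᶜ else 0) := by
    intro v
    have hmem : {x | v ∈ s x} =ᵐ[μ] {x | x ∈ E ∧ v ∈ S ∨ x ∉ E ∧ v ∈ S'} := by
      rw [Filter.eventuallyEq_set]
      filter_upwards [hS, hS'] with x hx hx'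
      by_cases hxE : x ∈ E <;> simp [hxE, hx, hx']
    rw [measureReal_congr hmem]
    by_cases hvS : v ∈ S <;> by_cases hvS' : v ∈ S' <;>
      simp [hvS, hvS', ← Set.compl_def, _root_.em, measureReal_add_measureReal_compl hE]
  simp [hv, sum_add_distrib, mul_comm]

lemma le_ite_one_zero_iff {x : ℝ} (hx : x ∈ Set.Ioo 0 1) (P : Prop) [Decidable P] :
    (x ≤ if P then 1 else 0) ↔ P := by
  split_ifs with h
  · simpa [h] using hx.2.le
  · simpa [h] using hx.1

namespace InfoNetwork

variable {V : Type*} [Fintype V]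

lemma activeSet_succ_empty (N : InfoNetwork V) (A : Set V) (θ : V → ℝ) (t : ℕ) :
    N.activeSet A ∅ θ (t + 1) = {v | θ v ≤ ∑ u, (N.activeSet A ∅ θ t).indicator (N.b v) u} := by
  simp [activeSet]

lemma activeSet_empty_eq_iterate (N : InfoNetwork V) {θ : V → ℝ} {f : Finset V → Finset V}
    (hf : ∀ S : Finset V, {v | θ v ≤ ∑ u, (S : Set V).indicator (N.b v) u} = f S)
    (A : Finset V) (t : ℕ) : N.activeSet A ∅ θ t = ↑(f^[t] A) := by
  induction t with
  | zero => simp [activeSet]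
  | succ t ih => rw [activeSet_succ_empty, ih, hf, Function.iterate_succ_apply']

end InfoNetwork

namespace CyclicCounterexample

noncomputable def network : InfoNetwork (Fin 4) where
  d := 0
  b := ![![1, 0, 0, 0], ![0, 0, 0, 1], ![0, 0, 1/2, 1/2], ![0, 1, 0, 0]]
  b_nonneg v u := by fin_cases v <;> fin_cases u <;> norm_num
  b_le_one v u := by fin_cases v <;> fin_cases u <;> norm_num
  row_sum v := by fin_cases v <;> simp [Fin.sum_univ_four, Matrix.cons_val]; norm_num
  void_loop := rfl

/-- The active set one step after `S` when all thresholds lie in `(0,1)`;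
`low` records whether `θ 2 ≤ 1/2`. -/
def step (low : Bool) (S : Finset (Fin 4)) : Finset (Fin 4) :=
  {v | v = 0 ∧ 0 ∈ S ∨ v = 1 ∧ 3 ∈ S ∨ v = 3 ∧ 1 ∈ S ∨
    v = 2 ∧ (2 ∈ S ∧ 3 ∈ S ∨ low ∧ (2 ∈ S ∨ 3 ∈ S))}

lemma setOf_threshold_le {θ : Fin 4 → ℝ} (hθ : ∀ v, θ v ∈ Set.Ioo 0 1) (S : Finset (Fin 4)) :
    {v | θ v ≤ ∑ u, (S : Set (Fin 4)).indicator (network.b v) u} = ↑(step (θ 2 ≤ 1/2) S) := by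
  ext v
  simp only [Set.indicator_apply, Finset.mem_coe, Fin.sum_univ_four]
  fin_cases v <;> simp [step, network, Matrix.cons_val, le_ite_one_zero_iff (hθ _)]
  have ⟨h₀, h₁⟩ := hθ 2
  by_cases h2 : 2 ∈ S <;> by_cases h3 : 3 ∈ S <;> simp [h2, h3]
  all_goals linarith

lemma activeSet_eq {θ : Fin 4 → ℝ} (hθ : ∀ v, θ v ∈ Set.Ioo 0 1) (A : Finset (Fin 4)) (t : ℕ) :
    network.activeSet A ∅ θ t = ↑((step (θ 2 ≤ 1/2))^[t] A) :=
  network.activeSet_empty_eq_iterate (setOf_threshold_le hθ) A t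

def activationCount (A : Finset (Fin 4)) (t : ℕ) : ℕ :=
  #((step true)^[t] A) + #((step false)^[t] A)

lemma sum_EX_eq (A : Finset (Fin 4)) (t : ℕ) :
    ∑ v, network.EX A ∅ t v = activationCount A t / 2 := by
  have hlow : MeasurableSet {θ : Fin 4 → ℝ | θ 2 ≤ 1/2} :=
    measurableSet_le (measurable_pi_apply 2) measurable_const
  have hhalf : (thresholdMeasure (Fin 4)).real {θ | θ 2 ≤ 1/2} = 1/2 :=
    measureReal_thresholdMeasure_le (by norm_num) (by norm_num) 2
  have hsum := sum_measureReal_mem_of_ae_eq hlow (s := fun θ => network.activeSet A ∅ θ t)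
    (S := (step true)^[t] A) (S' := (step false)^[t] A)
    (by filter_upwards [ae_thresholdMeasure_mem_Ioo] with θ hθ hθ₂
        rw [activeSet_eq hθ, decide_eq_true hθ₂])
    (by filter_upwards [ae_thresholdMeasure_mem_Ioo] with θ hθ hθ₂
        rw [activeSet_eq hθ, decide_eq_false hθ₂])
  simp only [InfoNetwork.EX, ← measureReal_def]
  rw [hsum, probReal_compl_eq_one_sub hlow, hhalf, activationCount]
  push_cast
  ring

lemma sigmaBar_eq (T : ℕ) (A : Finset (Fin 4)) :
    network.sigmaBar T A ∅ = (∑ t ∈ Icc 1 T, activationCount A t : ℕ) / (2 * T) := by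
  simp only [InfoNetwork.sigmaBar, sum_EX_eq]
  push_cast
  rw [← sum_div]
  field_simp

end CyclicCounterexample

open CyclicCounterexample in
/-- There exist an information network whose directed graph on `V \ {d}`
(with an edge `v → u` whenever `b v u > 0`) contains a directed cycle, and a time horizon
`T ≥ 1`, such that the expected influence `A ↦ σ̄(A,∅)` over `[1,T]`, as a set function on
subsets of `V \ {d}`, is not submodular. -/
theorem exists_cyclic_network_influence_not_submodular :
    ∃ (n : ℕ) (N : InfoNetwork (Fin n)) (T : ℕ), 1 ≤ T ∧
      (∃ v : Fin n, Relation.TransGen N.edgeRel v v) ∧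
      ¬ SubmodularOn {x : Fin n | x ≠ N.d} (fun A => N.sigmaBar T A ∅) := by
  refine ⟨4, network, 2, one_le_two, ⟨1, ?_⟩, ?_⟩
  · have h13 : network.edgeRel 1 3 := ⟨by decide, by decide, by simp [network]⟩
    have h31 : network.edgeRel 3 1 := ⟨by decide, by decide, by simp [network]⟩
    exact .tail (.single h13) h31
  · intro hsub
    have hgain := hsub ↑({1} : Finset (Fin 4)) ↑({1, 2} : Finset (Fin 4)) (by simp)
      (by simp [Set.insert_subset_iff, network]) 3 (by simp [network]) (by simp)
    simp only [← coe_insert, sigmaBar_eq] at hgain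
    rw [show ∑ t ∈ Icc 1 2, activationCount {3, 1, 2} t = 12 by decide,
      show ∑ t ∈ Icc 1 2, activationCount {1, 2} t = 6 by decide,
      show ∑ t ∈ Icc 1 2, activationCount {3, 1} t = 10 by decide,
      show ∑ t ∈ Icc 1 2, activationCount {1} t = 5 by decide] at hgain
    norm_num at hgain
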